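/- For all positive integers r and every real x ≥ 1, |Σ_{n ≤ x} c*(n,r) − δ_{r,1} x| ≤ σ*(r), where σ*(r) = Σ_{d | r, gcd(d, r/d) = 1} d is the sum of the unitary divisors of r and δ_{r,1} = 1 if r = 1 and 0 otherwise. In particular, the mean value M(c*(·,r)) exists and equals δ_{r,1}. -/

import Mathlib

open Finset Filter Topology

/-- The unitary gcd `(n,r)_U`: the largest `d` with `d ∣ n`, `d ∣ r` and `gcd(d, r/d) = 1`. -/
def unitaryGcd (n r : ℕ) : ℕ :=
  (r.divisors.filter (fun d => d ∣ n ∧ Nat.Coprime d (r / d))).sup id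

/-- The unitary Ramanujan sum `c*(n,r) = ∑_{1 ≤ k ≤ r, (k,r)_U = 1} exp(2πikn/r)`. -/
noncomputable def unitaryRamanujanSum (n r : ℕ) : ℂ :=
  ∑ k ∈ (Finset.Icc 1 r).filter (fun k => unitaryGcd k r = 1),
    Complex.exp (2 * Real.pi * Complex.I * k * n / r)

/-
Write `μ*(d) = (-1)^ω(d)` and `U(r)` for the set of unitary divisors of `r`. A unitary divisor
of `r` is determined by its set `S` of prime factors (the inverse is `S ↦ ∏_{p ∈ S} p ^ v_p(r)`),
and it divides `k` exactly when every `p ∈ S` has `p ^ v_p(r) ∣ k`. Hence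
`∑_{d ∈ U(r), d ∣ k} μ*(d)` is an alternating sum over the subsets of a set of primes, which is
`1` exactly when `(k, r)_U = 1`. Inserting this into `c*(n, r)` and summing the geometric series
over the multiples of `d` gives `c*(n, r) = ∑_{d ∈ U(r)} μ*(d) (r/d) [r/d ∣ n]`, so
`∑_{n ≤ x} c*(n, r) = ∑_{d ∈ U(r)} μ*(d) (r/d) ⌊x / (r/d)⌋`. As `∑_{d ∈ U(r)} μ*(d) = δ_{r,1}`,
the error is `∑_{d ∈ U(r)} μ*(d) ((r/d) ⌊x / (r/d)⌋ - x)`, with terms bounded by `r/d`, and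
`d ↦ r/d` permutes `U(r)`.
-/

def unitaryDivisors (r : ℕ) : Finset ℕ := {d ∈ r.divisors | d.Coprime (r / d)}

def unitaryMobius (d : ℕ) : ℤ := (-1) ^ #d.primeFactors

-- `∏_{p ∈ S} p ^ v_p(r)`, written through `r.factorization` so that
-- `Nat.factorization_prod_pow_eq_self_of_le_factorization` computes its factorization.
def primeSetPart (r : ℕ) (S : Finset ℕ) : ℕ :=
  (r.factorization.filter (· ∈ S)).prod (· ^ ·)

def unitaryCommonPrimes (k r : ℕ) : Finset ℕ := {p ∈ r.primeFactors | ordProj[p] r ∣ k}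

section UnitaryDivisors

variable {r d k p : ℕ} {S : Finset ℕ}

theorem mem_unitaryDivisors :
    d ∈ unitaryDivisors r ↔ d ∣ r ∧ d.Coprime (r / d) ∧ r ≠ 0 := by
  simp [unitaryDivisors, and_assoc, and_comm (a := r ≠ 0)]

theorem pos_of_mem_unitaryDivisors (hd : d ∈ unitaryDivisors r) : 0 < d :=
  Nat.pos_of_mem_divisors (mem_filter.1 hd).1

theorem div_mem_unitaryDivisors (hd : d ∈ unitaryDivisors r) :
    r / d ∈ unitaryDivisors r := by
  obtain ⟨hdr, hco, hr⟩ := mem_unitaryDivisors.1 hd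
  refine mem_unitaryDivisors.2 ⟨Nat.div_dvd_of_dvd hdr, ?_, hr⟩
  rw [Nat.div_div_self hdr hr]
  exact hco.symm

theorem sum_unitaryDivisors_div {M : Type*} [AddCommMonoid M] (r : ℕ) (f : ℕ → M) :
    ∑ d ∈ unitaryDivisors r, f (r / d) = ∑ d ∈ unitaryDivisors r, f d := by
  have hinv : ∀ d ∈ unitaryDivisors r, r / (r / d) = d := fun d hd =>
    Nat.div_div_self (mem_unitaryDivisors.1 hd).1 (mem_unitaryDivisors.1 hd).2.2
  exact sum_nbij' (r / ·) (r / ·) (fun _ => div_mem_unitaryDivisors)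
    (fun _ => div_mem_unitaryDivisors) hinv hinv fun _ _ => rfl

theorem factorization_eq_of_mem_unitaryDivisors (hd : d ∈ unitaryDivisors r)
    (hp : p ∈ d.primeFactors) : d.factorization p = r.factorization p := by
  obtain ⟨hdr, hco, -⟩ := mem_unitaryDivisors.1 hd
  have hp_not_dvd : ¬p ∣ r / d := (Nat.prime_of_mem_primeFactors hp).coprime_iff_not_dvd.1
    (hco.coprime_dvd_left (Nat.dvd_of_mem_primeFactors hp))
  rw [← Nat.mul_div_cancel' hdr, Nat.factorization_mul_apply_of_coprime hco,
    Nat.factorization_eq_zero_of_not_dvd hp_not_dvd, add_zero]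

theorem primeSetPart_pos (r : ℕ) (S : Finset ℕ) : 0 < primeSetPart r S :=
  Nat.prod_pow_pos_of_zero_notMem_support fun h =>
    Nat.not_prime_zero (Nat.prime_of_mem_primeFactors (mem_filter.1 h).1)

theorem factorization_primeSetPart (r : ℕ) (S : Finset ℕ) :
    (primeSetPart r S).factorization = r.factorization.filter (· ∈ S) :=
  Nat.factorization_prod_pow_eq_self_of_le_factorization (n := r) fun p => by
    by_cases hp : p ∈ S <;> simp [hp]

theorem primeFactors_primeSetPart (hS : S ⊆ r.primeFactors) :
    (primeSetPart r S).primeFactors = S := by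
  rw [← Nat.support_factorization, factorization_primeSetPart, Finsupp.support_filter,
    Nat.support_factorization, filter_mem_eq_inter, inter_eq_right.2 hS]

theorem primeSetPart_primeFactors (hd : d ∈ unitaryDivisors r) :
    primeSetPart r d.primeFactors = d := by
  refine Nat.eq_of_factorization_eq (primeSetPart_pos ..).ne'
    (pos_of_mem_unitaryDivisors hd).ne' fun p => ?_
  rw [factorization_primeSetPart, Finsupp.filter_apply]
  split_ifs with hp
  · exact (factorization_eq_of_mem_unitaryDivisors hd hp).symm
  · rw [← Nat.support_factorization] at hp
    exact (Finsupp.notMem_support_iff.1 hp).symm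

theorem primeSetPart_dvd_iff (hS : S ⊆ r.primeFactors) :
    primeSetPart r S ∣ k ↔ ∀ p ∈ S, ordProj[p] r ∣ k := by
  rcases eq_or_ne k 0 with rfl | hk
  · simp
  rw [← Nat.factorization_le_iff_dvd (primeSetPart_pos ..).ne' hk, factorization_primeSetPart]
  refine ⟨fun h p hp => ?_, fun h p => ?_⟩
  · have := h p
    rw [Finsupp.filter_apply, if_pos hp] at this
    exact ((Nat.prime_of_mem_primeFactors (hS hp)).pow_dvd_iff_le_factorization hk).2 this
  · rw [Finsupp.filter_apply]
    split_ifs with hp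
    · exact ((Nat.prime_of_mem_primeFactors (hS hp)).pow_dvd_iff_le_factorization hk).1 (h p hp)
    · exact Nat.zero_le _

theorem primeSetPart_mem_unitaryDivisors (hr : r ≠ 0) (hS : S ⊆ r.primeFactors) :
    primeSetPart r S ∈ unitaryDivisors r := by
  have hdvd : primeSetPart r S ∣ r := (primeSetPart_dvd_iff hS).2 fun p _ => Nat.ordProj_dvd r p
  refine mem_unitaryDivisors.2 ⟨hdvd, ?_, hr⟩
  rw [← Nat.disjoint_primeFactors (primeSetPart_pos ..).ne'
    (Nat.div_pos (Nat.le_of_dvd hr.bot_lt hdvd) (primeSetPart_pos ..)).ne',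
    primeFactors_primeSetPart hS, disjoint_left]
  intro p hp hp'
  rw [← Nat.support_factorization, Finsupp.mem_support_iff, Nat.factorization_div hdvd,
    Finsupp.tsub_apply, factorization_primeSetPart, Finsupp.filter_apply, if_pos hp,
    tsub_self] at hp'
  exact hp' rfl

theorem primeFactors_subset_unitaryCommonPrimes (hd : d ∈ unitaryDivisors r) (hdk : d ∣ k) :
    d.primeFactors ⊆ unitaryCommonPrimes k r := by
  obtain ⟨hdr, -, hr⟩ := mem_unitaryDivisors.1 hd
  have hS : d.primeFactors ⊆ r.primeFactors := Nat.primeFactors_mono hdr hr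
  rw [← primeSetPart_primeFactors hd, primeSetPart_dvd_iff hS] at hdk
  exact fun p hp => mem_filter.2 ⟨hS hp, hdk p hp⟩

theorem primeSetPart_mem_filter_dvd (hr : r ≠ 0) (hS : S ⊆ unitaryCommonPrimes k r) :
    primeSetPart r S ∈ {d ∈ unitaryDivisors r | d ∣ k} := by
  have hSr : S ⊆ r.primeFactors := hS.trans (filter_subset _ _)
  exact mem_filter.2 ⟨primeSetPart_mem_unitaryDivisors hr hSr,
    (primeSetPart_dvd_iff hSr).2 fun p hp => (mem_filter.1 (hS hp)).2⟩

theorem sum_filter_dvd_unitaryDivisors {M : Type*} [AddCommMonoid M] (hr : r ≠ 0)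
    (f : ℕ → M) :
    ∑ d ∈ unitaryDivisors r with d ∣ k, f d =
      ∑ S ∈ (unitaryCommonPrimes k r).powerset, f (primeSetPart r S) := by
  refine sum_nbij' (·.primeFactors) (primeSetPart r) (fun d hd => ?_)
    (fun S hS => primeSetPart_mem_filter_dvd hr (mem_powerset.1 hS))
    (fun d hd => primeSetPart_primeFactors (mem_filter.1 hd).1)
    (fun S hS => primeFactors_primeSetPart ((mem_powerset.1 hS).trans (filter_subset _ _)))
    (fun d hd => by rw [primeSetPart_primeFactors (mem_filter.1 hd).1])
  obtain ⟨hd, hdk⟩ := mem_filter.1 hd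
  exact mem_powerset.2 (primeFactors_subset_unitaryCommonPrimes hd hdk)

end UnitaryDivisors

theorem unitaryGcd_eq_sup (k r : ℕ) :
    unitaryGcd k r = {d ∈ unitaryDivisors r | d ∣ k}.sup id := by
  simp only [unitaryGcd, unitaryDivisors, filter_filter, and_comm]

theorem unitaryGcd_self (r : ℕ) : unitaryGcd r r = r := by
  refine le_antisymm (Finset.sup_le fun d hd => Nat.divisor_le (mem_filter.1 hd).1) ?_
  rcases eq_or_ne r 0 with rfl | hr
  · exact Nat.zero_le _
  refine le_sup (f := id) (mem_filter.2 ⟨Nat.mem_divisors_self r hr, dvd_rfl, ?_⟩)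
  simp [Nat.div_self hr.bot_lt]

theorem unitaryGcd_eq_one_iff {k r : ℕ} (hr : r ≠ 0) :
    unitaryGcd k r = 1 ↔ unitaryCommonPrimes k r = ∅ := by
  rw [unitaryGcd_eq_sup]
  constructor
  · intro h
    refine eq_empty_of_forall_notMem fun p hp => ?_
    have hmem := primeSetPart_mem_filter_dvd hr (singleton_subset_iff.2 hp)
    have hle : primeSetPart r {p} ≤ 1 := h ▸ le_sup (f := id) hmem
    have hone : primeSetPart r {p} = 1 := le_antisymm hle (primeSetPart_pos ..)
    simpa [hone] using primeFactors_primeSetPart (singleton_subset_iff.2 (mem_filter.1 hp).1)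
  · intro h
    have hone : 1 ∈ {d ∈ unitaryDivisors r | d ∣ k} := mem_filter.2
      ⟨mem_unitaryDivisors.2 ⟨one_dvd r, Nat.coprime_one_left _, hr⟩, one_dvd k⟩
    refine le_antisymm (Finset.sup_le fun d hd => ?_) (le_sup (f := id) hone)
    obtain ⟨hd, hdk⟩ := mem_filter.1 hd
    have hd01 : d = 0 ∨ d = 1 := by
      simpa [h] using primeFactors_subset_unitaryCommonPrimes hd hdk
    exact (hd01.resolve_left (pos_of_mem_unitaryDivisors hd).ne').le

theorem sum_unitaryMobius_filter_dvd (k r : ℕ) :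
    ∑ d ∈ unitaryDivisors r with d ∣ k, unitaryMobius d =
      if unitaryGcd k r = 1 then 1 else 0 := by
  rcases eq_or_ne r 0 with rfl | hr
  · simp [unitaryDivisors, unitaryGcd]
  simp only [sum_filter_dvd_unitaryDivisors hr, unitaryGcd_eq_one_iff hr]
  rw [← sum_powerset_neg_one_pow_card]
  refine sum_congr rfl fun S hS => ?_
  rw [unitaryMobius, primeFactors_primeSetPart ((mem_powerset.1 hS).trans (filter_subset _ _))]

theorem sum_unitaryMobius (r : ℕ) :
    ∑ d ∈ unitaryDivisors r, unitaryMobius d = if r = 1 then 1 else 0 := by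
  have := sum_unitaryMobius_filter_dvd r r
  rwa [filter_true_of_mem fun d hd => (mem_unitaryDivisors.1 hd).1, unitaryGcd_self] at this

theorem sum_filter_dvd_Icc_mul {M : Type*} [AddCommMonoid M] (f : ℕ → M) {d : ℕ} (hd : 0 < d)
    (m : ℕ) : ∑ k ∈ Icc 1 (d * m) with d ∣ k, f k = ∑ j ∈ Icc 1 m, f (d * j) := by
  have himage : {k ∈ Icc 1 (d * m) | d ∣ k} = (Icc 1 m).image (d * ·) := by
    ext k
    simp only [mem_filter, mem_Icc, mem_image]
    constructor
    · rintro ⟨⟨h1, h2⟩, j, rfl⟩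
      exact ⟨j, ⟨Nat.pos_of_mul_pos_left h1, Nat.le_of_mul_le_mul_left h2 hd⟩, rfl⟩
    · rintro ⟨j, ⟨h1, h2⟩, rfl⟩
      exact ⟨⟨Nat.mul_pos hd h1, Nat.mul_le_mul_left d h2⟩, dvd_mul_right d j⟩
  rw [himage, sum_image fun a _ b _ h => Nat.eq_of_mul_eq_mul_left hd h]

section RootsOfUnity

variable {R : Type*} [CommRing R] [IsDomain R] {ζ : R} {r d : ℕ}

theorem sum_Icc_pow_eq_zero {z : R} {m : ℕ} (hz : z ^ m = 1) (hz1 : z ≠ 1) :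
    ∑ j ∈ Icc 1 m, z ^ j = 0 := by
  have h := geom_sum_Ico_mul z (Nat.le_add_left 1 m)
  rw [Finset.Ico_add_one_right_eq_Icc, pow_succ, hz, one_mul, pow_one, sub_self] at h
  exact (mul_eq_zero.1 h).resolve_right (sub_ne_zero.2 hz1)

theorem IsPrimitiveRoot.sum_Icc_pow_mul (hζ : IsPrimitiveRoot ζ r) (n : ℕ) :
    ∑ j ∈ Icc 1 r, ζ ^ (j * n) = if r ∣ n then (r : R) else 0 := by
  split_ifs with h
  · rw [sum_congr rfl fun j _ => (hζ.pow_eq_one_iff_dvd _).2 (dvd_mul_of_dvd_right h j)]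
    simp
  · simp_rw [mul_comm _ n, pow_mul]
    refine sum_Icc_pow_eq_zero ?_ (mt (hζ.pow_eq_one_iff_dvd n).1 h)
    rw [← pow_mul, mul_comm, pow_mul, hζ.pow_eq_one, one_pow]

theorem IsPrimitiveRoot.sum_filter_dvd_Icc_pow_mul (hζ : IsPrimitiveRoot ζ r) (hd : d ∣ r)
    (n : ℕ) :
    ∑ k ∈ Icc 1 r with d ∣ k, ζ ^ (k * n) =
      if r / d ∣ n then ((r / d : ℕ) : R) else 0 := by
  rcases eq_or_ne r 0 with rfl | hr
  · simp
  obtain ⟨m, rfl⟩ := hd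
  have hd0 : 0 < d := Nat.pos_of_ne_zero (left_ne_zero_of_mul hr)
  rw [Nat.mul_div_cancel_left m hd0, sum_filter_dvd_Icc_mul _ hd0]
  simp_rw [mul_assoc, pow_mul ζ d]
  exact (hζ.pow (Nat.pos_of_ne_zero hr) rfl).sum_Icc_pow_mul n

theorem IsPrimitiveRoot.sum_unitaryGcd_eq_one_pow_mul (hζ : IsPrimitiveRoot ζ r) (n : ℕ) :
    ∑ k ∈ Icc 1 r with unitaryGcd k r = 1, ζ ^ (k * n) =
      ∑ d ∈ unitaryDivisors r,
        (unitaryMobius d : R) * if r / d ∣ n then ((r / d : ℕ) : R) else 0 := by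
  calc _ = ∑ k ∈ Icc 1 r, ∑ d ∈ unitaryDivisors r with d ∣ k,
          (unitaryMobius d : R) * ζ ^ (k * n) := by
        rw [sum_filter]
        refine sum_congr rfl fun k _ => ?_
        rw [← sum_mul, ← Int.cast_sum, sum_unitaryMobius_filter_dvd]
        split_ifs <;> simp
    _ = ∑ d ∈ unitaryDivisors r,
          (unitaryMobius d : R) * ∑ k ∈ Icc 1 r with d ∣ k, ζ ^ (k * n) := by
        simp_rw [sum_filter, mul_sum, mul_ite, mul_zero]
        exact sum_comm
    _ = _ := sum_congr rfl fun d hd => by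
        rw [hζ.sum_filter_dvd_Icc_pow_mul (mem_unitaryDivisors.1 hd).1]

end RootsOfUnity

theorem unitaryRamanujanSum_eq (n r : ℕ) :
    unitaryRamanujanSum n r = ∑ d ∈ unitaryDivisors r,
      (unitaryMobius d : ℂ) * if r / d ∣ n then ((r / d : ℕ) : ℂ) else 0 := by
  rcases eq_or_ne r 0 with rfl | hr
  · simp [unitaryRamanujanSum, unitaryDivisors]
  rw [← (Complex.isPrimitiveRoot_exp r hr).sum_unitaryGcd_eq_one_pow_mul n, unitaryRamanujanSum]
  refine sum_congr rfl fun k _ => ?_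
  rw [← Complex.exp_nat_mul]
  congr 1
  push_cast
  ring

theorem sum_Icc_unitaryRamanujanSum (N r : ℕ) :
    ∑ n ∈ Icc 1 N, unitaryRamanujanSum n r =
      ∑ d ∈ unitaryDivisors r,
        (unitaryMobius d : ℂ) * ((r / d * (N / (r / d)) : ℕ) : ℂ) := by
  simp_rw [unitaryRamanujanSum_eq]
  rw [sum_comm]
  refine sum_congr rfl fun d _ => ?_
  have hcard : #{n ∈ Icc 1 N | r / d ∣ n} = N / (r / d) :=
    Nat.Ioc_filter_dvd_card_eq_div N (r / d)
  rw [← mul_sum, ← sum_filter, sum_const, hcard, nsmul_eq_mul, Nat.cast_mul,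
    mul_comm ((r / d : ℕ) : ℂ)]

theorem abs_mul_floor_div_sub_le {m : ℕ} (hm : 0 < m) {x : ℝ} (hx : 0 ≤ x) :
    |((m * (⌊x⌋₊ / m) : ℕ) : ℝ) - x| ≤ m := by
  set N := ⌊x⌋₊
  have hle : m * (N / m) ≤ N := Nat.mul_div_le N m
  have hlt : N < m * (N / m) + m := by simpa [mul_add] using Nat.lt_mul_div_succ N hm
  have hNx : (N : ℝ) ≤ x := Nat.floor_le hx
  have hxN : x < N + 1 := Nat.lt_floor_add_one x
  have hle' : ((m * (N / m) : ℕ) : ℝ) ≤ N := by exact_mod_cast hle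
  have hlt' : (N : ℝ) + 1 ≤ ((m * (N / m) : ℕ) : ℝ) + m := by exact_mod_cast hlt
  rw [abs_le]
  constructor <;> linarith

theorem norm_sum_Icc_unitaryRamanujanSum_sub_le (r : ℕ) {x : ℝ} (hx : 0 ≤ x) :
    ‖∑ n ∈ Icc 1 ⌊x⌋₊, unitaryRamanujanSum n r - (if r = 1 then 1 else 0) * (x : ℂ)‖ ≤
      ∑ d ∈ unitaryDivisors r, (d : ℝ) := by
  have hδ : (if r = 1 then 1 else 0 : ℂ) =
      ∑ d ∈ unitaryDivisors r, (unitaryMobius d : ℂ) := by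
    rw [← Int.cast_sum, sum_unitaryMobius]
    push_cast
    rfl
  rw [sum_Icc_unitaryRamanujanSum, hδ, sum_mul, ← sum_sub_distrib,
    ← sum_unitaryDivisors_div r fun d => (d : ℝ)]
  refine (norm_sum_le _ _).trans (sum_le_sum fun d hd => ?_)
  have hm := pos_of_mem_unitaryDivisors (div_mem_unitaryDivisors hd)
  have hμ : ‖(unitaryMobius d : ℂ)‖ = 1 := by simp [unitaryMobius]
  rw [← mul_sub, norm_mul, hμ, one_mul, ← Complex.ofReal_natCast, ← Complex.ofReal_sub,
    Complex.norm_real, Real.norm_eq_abs]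
  exact abs_mul_floor_div_sub_le hm hx

theorem tendsto_div_of_norm_sub_mul_le {f : ℝ → ℂ} {c : ℂ} {A : ℝ}
    (h : ∀ᶠ x in atTop, ‖f x - c * x‖ ≤ A) :
    Tendsto (fun x : ℝ => f x / x) atTop (𝓝 c) := by
  rw [← tendsto_sub_nhds_zero_iff]
  refine squeeze_zero_norm' ?_ ((tendsto_const_nhds (x := A)).div_atTop tendsto_id)
  filter_upwards [h, eventually_gt_atTop 0] with x hx hx0
  have hxC : (x : ℂ) ≠ 0 := Complex.ofReal_ne_zero.2 hx0.ne'
  rw [div_sub' hxC, norm_div, Complex.norm_real, Real.norm_of_nonneg hx0.le, mul_comm]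
  exact div_le_div_of_nonneg_right hx hx0.le

theorem unitaryRamanujanSum_partial_sum_general (r : ℕ) :
    (∀ x : ℝ, 1 ≤ x →
      ‖(∑ n ∈ Finset.Icc 1 ⌊x⌋₊, unitaryRamanujanSum n r) -
          (if r = 1 then (1 : ℂ) else 0) * (x : ℂ)‖
        ≤ ((∑ d ∈ r.divisors.filter (fun d => Nat.Coprime d (r / d)), d : ℕ) : ℝ)) ∧
    Tendsto (fun x : ℝ => (∑ n ∈ Finset.Icc 1 ⌊x⌋₊, unitaryRamanujanSum n r) / (x : ℂ)) atTop
      (𝓝 (if r = 1 then (1 : ℂ) else 0)) := by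
  have hσ : ((∑ d ∈ r.divisors.filter (fun d => Nat.Coprime d (r / d)), d : ℕ) : ℝ) =
      ∑ d ∈ unitaryDivisors r, (d : ℝ) := by
    push_cast
    rfl
  have hbound (x : ℝ) (hx : 0 ≤ x) := norm_sum_Icc_unitaryRamanujanSum_sub_le r hx
  rw [hσ]
  exact ⟨fun x hx => hbound x (by linarith),
    tendsto_div_of_norm_sub_mul_le ((eventually_ge_atTop 0).mono hbound)⟩

/-- For every `r ≥ 1` and `x ≥ 1`, `|∑_{n ≤ x} c*(n,r) − δ_{r,1} x| ≤ σ*(r)`, where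
`σ*(r)` is the sum of the unitary divisors of `r`; in particular the mean value of
`c*(·,r)` exists and equals `δ_{r,1}`. -/
theorem unitaryRamanujanSum_partial_sum (r : ℕ) (hr : 0 < r) :
    (∀ x : ℝ, 1 ≤ x →
      ‖(∑ n ∈ Finset.Icc 1 ⌊x⌋₊, unitaryRamanujanSum n r) -
          (if r = 1 then (1 : ℂ) else 0) * (x : ℂ)‖
        ≤ ((∑ d ∈ r.divisors.filter (fun d => Nat.Coprime d (r / d)), d : ℕ) : ℝ)) ∧
    Tendsto (fun x : ℝ => (∑ n ∈ Finset.Icc 1 ⌊x⌋₊, unitaryRamanujanSum n r) / (x : ℂ)) atTop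
      (𝓝 (if r = 1 then (1 : ℂ) else 0)) :=
  unitaryRamanujanSum_partial_sum_general r
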